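/- Let F₃ be the free group on generators a, b, c, let F₂ be the free group on generators x, y, and let ε : F₃ → F₂ be the homomorphism with ε(a) = x, ε(b) = 1, ε(c) = y. Then for all natural numbers h and k, ε( (b⁻¹a^{h})^{1+k} · a · (a^{−h} c)^k · a^{−h} · b ) = x^{1+hk} · (y x^{−h})^k in F₂. -/
import Mathlib


namespace Stmt8

/-- Generators `a = ᾱ`, `b = β̄`, `c = γ̄` of the free group `F₃`. -/
def a : FreeGroup (Fin 3) := FreeGroup.of 0
def b : FreeGroup (Fin 3) := FreeGroup.of 1
def c : FreeGroup (Fin 3) := FreeGroup.of 2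

/-- Generators `x`, `y` of the free group `F₂`. -/
def x : FreeGroup (Fin 2) := FreeGroup.of 0
def y : FreeGroup (Fin 2) := FreeGroup.of 1

/-- The homomorphism `ε : F₃ → F₂` erasing all `b`'s: `a ↦ x, b ↦ 1, c ↦ y`. -/
def eps : FreeGroup (Fin 3) →* FreeGroup (Fin 2) := FreeGroup.lift ![x, 1, y]

private lemma aux {G : Type*} [Group G] (g w : G) (k : ℕ) :
    (g⁻¹ * w) ^ k * g⁻¹ = g⁻¹ * (w * g⁻¹) ^ k := by
  induction k with
  | zero => simp
  | succ n ih => rw [pow_succ', mul_assoc, ih, pow_succ']; simp [mul_assoc]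

/-- `ε((b⁻¹a^{h})^{1+k} · a · (a^{−h} c)^k · a^{−h} · b) = x^{1+hk} · (y x^{−h})^k`. -/
theorem stmt8 (h k : ℕ) :
    eps ((b⁻¹ * a ^ h) ^ (1 + k) * a * ((a ^ h)⁻¹ * c) ^ k * (a ^ h)⁻¹ * b) =
      x ^ (1 + h * k) * (y * (x ^ h)⁻¹) ^ k := by
  have ea : eps a = x := by simp [eps, a, x]
  have eb : eps b = 1 := by simp [eps, b]
  have ec : eps c = y := by simp [eps, c]
  simp only [map_mul, map_pow, map_inv, ea, eb, ec, inv_one, one_mul, mul_one]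
  rw [mul_assoc, mul_assoc, aux, ← pow_mul, ← mul_assoc, ← mul_assoc]
  congr 1
  rw [← pow_succ, mul_inv_eq_iff_eq_mul, ← pow_add]
  congr 1
  ring
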